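/- arXiv:2503.22210 — 4 statements merged into one kernel-verified Lean document; each statement's English description precedes it below -/
import Mathlib

section
/- If a forward complete C^2 system ẋ = f(t,x) on R^n is contractive (i.e., there exist k, λ > 0 such that every solution δx of the linearized equation δ̇x = J_f(t, x(t)) δx along any solution x(·) satisfies |δx(t)| ≤ k e^{-λ(t-t0)} |δx(t0)| for all t ≥ t0), then the system is incrementally exponentially stable: for any two solutions x1, x2 and all t ≥ t0, |x1(t) - x2(t)| ≤ k e^{-λ(t-t0)} |x1(t0) - x2(t0)|. -/
/-!
Join the initial points by the segment `s ↦ x₂ t₀ + s • (x₁ t₀ - x₂ t₀)` and let `G s` be the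
value at time `T` of the solution starting from its `s`-th point. A solution `z` starting close
enough to a reference solution `y` stays, by Grönwall, in a tube around `y` on `[t₀, T]` in which
`f t` is uniformly close to its linearization along `y`; a second Grönwall estimate then shows
that `z T - y T` differs from `δ T`, where `δ` solves the variational equation with
`δ t₀ = z t₀ - y t₀`, by `o(‖z t₀ - y t₀‖)`. Contraction bounds `‖δ T‖`, so the upper Dini
derivative of `G` is at most `k e^{-λ(T - t₀)} ‖x₁ t₀ - x₂ t₀‖` everywhere, and a Dini mean
value inequality concludes. The variational equation is solved globally by its Peano–Baker series.
-/

open Set Filter Metric MeasureTheory Real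
open scoped Topology NNReal Nat Interval

section PeanoBaker

variable {E : Type*} [NormedAddCommGroup E] [NormedSpace ℝ E]
  {B : ℝ → E →L[ℝ] E} {t₁ : ℝ} {v : E}

/-- Terms of the Peano–Baker series, whose sum solves `δ' = B t δ`, `δ t₁ = v`. -/
noncomputable def peanoBakerTerm (B : ℝ → E →L[ℝ] E) (t₁ : ℝ) (v : E) : ℕ → ℝ → E
  | 0 => fun _ => v
  | m + 1 => fun t => ∫ s in t₁..t, B s (peanoBakerTerm B t₁ v m s)

theorem continuous_peanoBakerTerm (hB : Continuous B) :
    ∀ m, Continuous (peanoBakerTerm B t₁ v m)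
  | 0 => continuous_const
  | m + 1 => intervalIntegral.continuous_primitive
      (fun _ _ => (hB.clm_apply (continuous_peanoBakerTerm hB m)).intervalIntegrable _ _) t₁

theorem hasDerivAt_peanoBakerTerm_succ [CompleteSpace E] (hB : Continuous B) (m : ℕ) (t : ℝ) :
    HasDerivAt (peanoBakerTerm B t₁ v (m + 1)) (B t (peanoBakerTerm B t₁ v m t)) t :=
  (hB.clm_apply (continuous_peanoBakerTerm hB m)).integral_hasStrictDerivAt t₁ t |>.hasDerivAt

theorem norm_peanoBakerTerm_le (hB : Continuous B) {C t : ℝ}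
    (hC : ∀ s ∈ uIcc t₁ t, ‖B s‖ ≤ C) (m : ℕ) :
    ‖peanoBakerTerm B t₁ v m t‖ ≤ ‖v‖ * C ^ m * |t - t₁| ^ m / m ! := by
  induction m generalizing t with
  | zero => simp [peanoBakerTerm]
  | succ m ih =>
    have hC0 : 0 ≤ C := (norm_nonneg _).trans (hC t₁ left_mem_uIcc)
    have hpt : ∀ s ∈ Ι t₁ t, ‖B s (peanoBakerTerm B t₁ v m s)‖
        ≤ ‖v‖ * C ^ (m + 1) / m ! * |s - t₁| ^ m := by
      intro s hs
      have hsub : uIcc t₁ s ⊆ uIcc t₁ t := uIcc_subset_uIcc_left (uIoc_subset_uIcc hs)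
      calc ‖B s (peanoBakerTerm B t₁ v m s)‖ ≤ C * ‖peanoBakerTerm B t₁ v m s‖ :=
            (B s).le_of_opNorm_le (hC s (hsub right_mem_uIcc)) _
        _ ≤ C * (‖v‖ * C ^ m * |s - t₁| ^ m / m !) :=
            mul_le_mul_of_nonneg_left (ih fun r hr => hC r (hsub hr)) hC0
        _ = ‖v‖ * C ^ (m + 1) / m ! * |s - t₁| ^ m := by ring
    calc ‖∫ s in t₁..t, B s (peanoBakerTerm B t₁ v m s)‖
        ≤ ∫ s in Ι t₁ t, ‖B s (peanoBakerTerm B t₁ v m s)‖ :=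
          intervalIntegral.norm_integral_le_integral_norm_uIoc
      _ ≤ ∫ s in Ι t₁ t, ‖v‖ * C ^ (m + 1) / m ! * |s - t₁| ^ m := by
          refine setIntegral_mono_on ?_ ?_ measurableSet_uIoc hpt
          · exact ((hB.clm_apply (continuous_peanoBakerTerm hB m)).norm.integrableOn_Icc).mono_set
              uIoc_subset_uIcc
          · exact (by fun_prop : Continuous fun s : ℝ => ‖v‖ * C ^ (m + 1) / m ! * |s - t₁| ^ m)
              |>.integrableOn_Icc.mono_set uIoc_subset_uIcc
      _ = ‖v‖ * C ^ (m + 1) * |t - t₁| ^ (m + 1) / (m + 1)! := by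
          rw [integral_const_mul, integral_pow_abs_sub_uIoc, Nat.factorial_succ]
          push_cast
          field_simp

theorem norm_peanoBakerTerm_le_of_abs_le (hB : Continuous B) {b C t : ℝ}
    (hC : ∀ s ∈ Icc (t₁ - b) (t₁ + b), ‖B s‖ ≤ C) (ht : |t - t₁| ≤ b) (m : ℕ) :
    ‖peanoBakerTerm B t₁ v m t‖ ≤ ‖v‖ * (C * b) ^ m / m ! := by
  have hsub : uIcc t₁ t ⊆ Icc (t₁ - b) (t₁ + b) :=
    uIcc_subset_Icc (by simp [(abs_nonneg _).trans ht]) (by constructor <;> linarith [abs_le.mp ht])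
  have hC0 : 0 ≤ C := (norm_nonneg _).trans (hC t₁ (hsub left_mem_uIcc))
  calc ‖peanoBakerTerm B t₁ v m t‖ ≤ ‖v‖ * C ^ m * |t - t₁| ^ m / m ! :=
        norm_peanoBakerTerm_le hB (fun s hs => hC s (hsub hs)) m
    _ ≤ ‖v‖ * C ^ m * b ^ m / m ! := by gcongr
    _ = ‖v‖ * (C * b) ^ m / m ! := by ring

theorem summable_peanoBakerTerm [CompleteSpace E] (hB : Continuous B) (t : ℝ) :
    Summable fun m => peanoBakerTerm B t₁ v m t := by
  obtain ⟨C, hC⟩ := isCompact_Icc.exists_bound_of_continuousOn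
    (hB.continuousOn (s := Icc (t₁ - |t - t₁|) (t₁ + |t - t₁|)))
  refine .of_norm_bounded ?_ (norm_peanoBakerTerm_le_of_abs_le hB hC le_rfl)
  simpa only [mul_div_assoc] using
    (Real.summable_pow_div_factorial (C * |t - t₁|)).mul_left ‖v‖

theorem exists_isIntegralCurve_clm_apply [CompleteSpace E] (hB : Continuous B) (t₁ : ℝ) (v : E) :
    ∃ δ : ℝ → E, δ t₁ = v ∧ IsIntegralCurve δ fun t => B t := by
  have hsplit (t : ℝ) : ∑' m, peanoBakerTerm B t₁ v m t
      = v + ∑' m, peanoBakerTerm B t₁ v (m + 1) t :=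
    (summable_peanoBakerTerm hB t).tsum_eq_zero_add
  refine ⟨fun t => ∑' m, peanoBakerTerm B t₁ v m t, by simp [hsplit, peanoBakerTerm], fun t => ?_⟩
  set b := |t - t₁| + 1
  obtain ⟨C, hC⟩ := isCompact_Icc.exists_bound_of_continuousOn
    (hB.continuousOn (s := Icc (t₁ - b) (t₁ + b)))
  have htU : t ∈ Ioo (t₁ - b) (t₁ + b) := by
    constructor <;> linarith [neg_abs_le (t - t₁), le_abs_self (t - t₁)]
  have hderiv := hasDerivAt_tsum_of_isPreconnected
    (g := fun m => peanoBakerTerm B t₁ v (m + 1)) (g' := fun m s => B s (peanoBakerTerm B t₁ v m s))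
    ((Real.summable_pow_div_factorial (C * b)).mul_left (C * ‖v‖)) isOpen_Ioo isPreconnected_Ioo
    (fun m s _ => hasDerivAt_peanoBakerTerm_succ hB m s)
    (fun m s hs => by
      have hsb : |s - t₁| ≤ b := abs_le.mpr ⟨by linarith [hs.1], by linarith [hs.2]⟩
      have hs' : s ∈ Icc (t₁ - b) (t₁ + b) := Ioo_subset_Icc_self hs
      calc ‖B s (peanoBakerTerm B t₁ v m s)‖ ≤ C * ‖peanoBakerTerm B t₁ v m s‖ :=
            (B s).le_of_opNorm_le (hC s hs') _
        _ ≤ C * (‖v‖ * (C * b) ^ m / m !) := mul_le_mul_of_nonneg_left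
            (norm_peanoBakerTerm_le_of_abs_le hB hC hsb m) ((norm_nonneg _).trans (hC s hs'))
        _ = C * ‖v‖ * ((C * b) ^ m / m !) := by ring)
    htU ((summable_peanoBakerTerm hB t).comp_injective (add_left_injective 1)) htU
  rw [← (B t).map_tsum (summable_peanoBakerTerm hB t)] at hderiv
  simpa only [hsplit] using hderiv.const_add v

end PeanoBaker

theorem norm_sub_le_mul_of_forall_eventually_norm_sub_le {E : Type*} [NormedAddCommGroup E]
    {g : ℝ → E} {a b C : ℝ} (hab : a ≤ b) (hg : ContinuousOn g (Icc a b))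
    (hloc : ∀ x ∈ Ico a b, ∀ ε > 0, ∀ᶠ z in 𝓝[>] x, ‖g z - g x‖ ≤ (C + ε) * (z - x)) :
    ‖g b - g a‖ ≤ C * (b - a) := by
  refine image_le_of_liminf_slope_right_le_deriv_boundary (f := fun s => ‖g s - g a‖)
    (B' := fun _ => C) (hg.sub continuousOn_const).norm (by simp) (by fun_prop)
    (fun x _ => ((hasDerivAt_id x).sub_const a).const_mul C |>.hasDerivWithinAt |>.congr_deriv
      (mul_one C)) (fun x hx r hr => ?_) ⟨hab, le_rfl⟩
  have hε : 0 < (r - C) / 2 := by linarith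
  refine (((hloc x hx _ hε).and self_mem_nhdsWithin).mono fun z ⟨hz, hxz⟩ => ?_).frequently
  have hxz : 0 < z - x := sub_pos.mpr hxz
  calc slope (fun s => ‖g s - g a‖) x z = (‖g z - g a‖ - ‖g x - g a‖) / (z - x) :=
        slope_def_field _ _ _
    _ ≤ ‖g z - g x‖ / (z - x) := by
        gcongr
        simpa using norm_sub_norm_le (g z - g a) (g x - g a)
    _ ≤ C + (r - C) / 2 := (div_le_iff₀ hxz).mpr hz
    _ < r := by linarith

theorem forall_lt_of_forall_Ico_le_imp_lt {u : ℝ → ℝ} {a b c : ℝ}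
    (hu : ContinuousOn u (Icc a b))
    (h : ∀ τ ∈ Icc a b, (∀ t ∈ Ico a τ, u t ≤ c) → u τ < c) :
    ∀ t ∈ Icc a b, u t < c := by
  by_contra! hne
  set S := Icc a b ∩ u ⁻¹' Ici c
  have hS : IsClosed S := hu.preimage_isClosed_of_isClosed isClosed_Icc isClosed_Ici
  have hmem : sInf S ∈ S := hS.csInf_mem hne ⟨a, fun t ht => ht.1.1⟩
  refine (h _ hmem.1 fun t ht => ?_).not_ge hmem.2
  by_contra! hct
  have htS : t ∈ S := ⟨⟨ht.1, ht.2.le.trans hmem.1.2⟩, hct.le⟩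
  exact (csInf_le ⟨a, fun s hs => hs.1.1⟩ htS).not_gt ht.2

theorem IsCompact.exists_pos_forall_dist_lt {X Y : Type*} [PseudoMetricSpace X]
    [PseudoMetricSpace Y] {K : Set X} (hK : IsCompact K) {g : X → Y}
    (hg : ∀ p ∈ K, ContinuousAt g p) {ε : ℝ} (hε : 0 < ε) :
    ∃ ρ > 0, ∀ p ∈ K, ∀ q, dist p q < ρ → dist (g p) (g q) < ε := by
  obtain ⟨ρ, hρ, h⟩ := Metric.mem_uniformity_dist.mp
    (hK.uniformContinuousAt_of_continuousAt g hg (Metric.dist_mem_uniformity hε))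
  exact ⟨ρ, hρ, fun p hp q hpq => h hpq hp⟩

theorem norm_sub_le_of_forall_exists_norm_sub_le {α E : Type*} [NormedAddCommGroup E]
    [NormedSpace ℝ E] {initial terminal : α → E} {K : ℝ}
    (hinitial : Function.Surjective initial)
    (hloc : ∀ y, ∀ ε > 0, ∃ η > 0, ∀ z, ‖initial z - initial y‖ ≤ η →
      ‖terminal z - terminal y‖ ≤ (K + ε) * ‖initial z - initial y‖) (x₁ x₂ : α) :
    ‖terminal x₁ - terminal x₂‖ ≤ K * ‖initial x₁ - initial x₂‖ := by
  set d := ‖initial x₁ - initial x₂‖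
  obtain ⟨γ, hγ⟩ :
      ∃ γ : ℝ → α, ∀ s, initial (γ s) = initial x₂ + s • (initial x₁ - initial x₂) :=
    ⟨fun s => (hinitial _).choose, fun s => (hinitial _).choose_spec⟩
  have hdist (s σ : ℝ) : ‖initial (γ s) - initial (γ σ)‖ = |s - σ| * d := by
    rw [hγ, hγ, add_sub_add_left_eq_sub, ← sub_smul, norm_smul, Real.norm_eq_abs]
  have hterminal {y z : α} (h : initial z = initial y) : terminal z = terminal y := by
    obtain ⟨η, hη, hz⟩ := hloc y 1 one_pos
    simpa [h, sub_eq_zero] using hz z (by simp [h, hη.le])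
  have habs (σ : ℝ) : Tendsto (fun s => |s - σ|) (𝓝 σ) (𝓝 0) := by
    simpa using ((continuous_id.sub (continuous_const (y := σ))).abs.tendsto σ)
  have hG (σ : ℝ) (ε : ℝ) (hε : 0 < ε) :
      ∀ᶠ s in 𝓝 σ, ‖terminal (γ s) - terminal (γ σ)‖ ≤ (K * d + ε) * |s - σ| := by
    obtain ⟨η, hη, h⟩ := hloc (γ σ) (ε / (d + 1)) (by positivity)
    have hnear : ∀ᶠ s in 𝓝 σ, |s - σ| * d ≤ η := by
      simpa using (habs σ).mul_const d |>.eventually (ge_mem_nhds (by simpa using hη))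
    filter_upwards [hnear] with s hs
    have hd : ε / (d + 1) * d ≤ ε := by
      rw [div_mul_eq_mul_div, div_le_iff₀ (by positivity)]
      nlinarith [norm_nonneg (initial x₁ - initial x₂)]
    calc ‖terminal (γ s) - terminal (γ σ)‖ ≤ (K + ε / (d + 1)) * (|s - σ| * d) := by
          simpa only [hdist] using h (γ s) (by rwa [hdist])
      _ = (K * d + ε / (d + 1) * d) * |s - σ| := by ring
      _ ≤ (K * d + ε) * |s - σ| := by gcongr
  have hcont : Continuous fun s => terminal (γ s) := continuous_iff_continuousAt.mpr fun σ =>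
    tendsto_iff_norm_sub_tendsto_zero.mpr <| squeeze_zero' (.of_forall fun _ => norm_nonneg _)
      (hG σ 1 one_pos) (by simpa using (habs σ).const_mul (K * d + 1))
  have h01 := norm_sub_le_mul_of_forall_eventually_norm_sub_le zero_le_one hcont.continuousOn
    fun x _ ε hε => ((hG x ε hε).filter_mono nhdsWithin_le_nhds).and self_mem_nhdsWithin |>.mono
      fun s ⟨hs, hxs⟩ => by rwa [abs_of_pos (sub_pos.mpr hxs)] at hs
  rwa [hterminal (z := γ 1) (y := x₁) (by simp [hγ]),
    hterminal (z := γ 0) (y := x₂) (by simp [hγ]), sub_zero, mul_one] at h01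

theorem gronwallBound_zero_eq_mul {K : ℝ} (hK : K ≠ 0) (ε x : ℝ) :
    gronwallBound 0 K ε x = ε * gronwallBound 0 K 1 x := by
  simp only [gronwallBound_of_K_ne_0 hK, zero_mul, zero_add]
  ring

section Trajectories

variable {E : Type*} [NormedAddCommGroup E] [NormedSpace ℝ E] {f : ℝ → E → E} {y z : ℝ → E}
  {t₀ T : ℝ}

theorem exists_forall_ge_hasDerivAt_clm_apply [CompleteSpace E] {B : ℝ → E →L[ℝ] E}
    (hB : ContinuousOn B (Ici t₀)) (v : E) :
    ∃ δ : ℝ → E, δ t₀ = v ∧ ∀ t ≥ t₀, HasDerivAt δ (B t (δ t)) t := by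
  have hmax : Continuous fun t => B (max t t₀) :=
    hB.comp_continuous (continuous_id.max continuous_const) fun t => le_max_right t t₀
  obtain ⟨δ, hδ₀, hδ⟩ := exists_isIntegralCurve_clm_apply hmax t₀ v
  exact ⟨δ, hδ₀, fun t ht => by simpa [max_eq_left ht] using hδ t⟩

theorem norm_sub_le_of_lipschitzOnWith_closedBall {r : ℝ} {L : ℝ≥0}
    (hlip : ∀ t ∈ Icc t₀ T, LipschitzOnWith L (f t) (closedBall (y t) r))
    (hy : ∀ t ≥ t₀, HasDerivAt y (f t (y t)) t) (hz : ∀ t ≥ t₀, HasDerivAt z (f t (z t)) t)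
    (hsmall : ‖z t₀ - y t₀‖ * exp (L * (T - t₀)) < r) :
    ∀ t ∈ Icc t₀ T, ‖z t - y t‖ ≤ ‖z t₀ - y t₀‖ * exp (L * (t - t₀)) := by
  have hcont {x : ℝ → E} (hx : ∀ t ≥ t₀, HasDerivAt x (f t (x t)) t) (τ : ℝ) :
      ContinuousOn x (Icc t₀ τ) := fun t ht => (hx t ht.1).continuousAt.continuousWithinAt
  have hr : 0 ≤ r := (by positivity : 0 ≤ ‖z t₀ - y t₀‖ * exp (L * (T - t₀))).trans hsmall.le
  have hgron (τ : ℝ) (hτ : τ ∈ Icc t₀ T) (htube : ∀ t ∈ Ico t₀ τ, ‖z t - y t‖ ≤ r) :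
      ∀ t ∈ Icc t₀ τ, ‖z t - y t‖ ≤ ‖z t₀ - y t₀‖ * exp (L * (t - t₀)) := by
    simpa only [dist_eq_norm] using dist_le_of_trajectories_ODE_of_mem
      (s := fun t => closedBall (y t) r) (fun t ht => hlip t ⟨ht.1, ht.2.le.trans hτ.2⟩)
      (hcont hz τ) (fun t ht => (hz t ht.1).hasDerivWithinAt)
      (fun t ht => mem_closedBall_iff_norm.mpr (htube t ht))
      (hcont hy τ) (fun t ht => (hy t ht.1).hasDerivWithinAt)
      (fun t _ => mem_closedBall_self hr) (dist_eq_norm _ _).le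
  have hinside := forall_lt_of_forall_Ico_le_imp_lt (u := fun t => ‖z t - y t‖)
    ((hcont hz T).sub (hcont hy T)).norm fun τ hτ htube =>
      (hgron τ hτ htube τ ⟨hτ.1, le_rfl⟩).trans_lt <| hsmall.trans_le' <| by
        gcongr
        exact hτ.2
  exact fun t ht => hgron T ⟨ht.1.trans ht.2, le_rfl⟩ (fun s hs => (hinside s ⟨hs.1, hs.2.le⟩).le)
    t ht

theorem norm_sub_sub_le_gronwallBound {A : ℝ → E →L[ℝ] E} {δ : ℝ → E} {r ε : ℝ} {L : ℝ≥0}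
    (hlip : ∀ t ∈ Icc t₀ T, LipschitzOnWith L (f t) (closedBall (y t) r))
    (hlin : ∀ t ∈ Icc t₀ T, ∀ x ∈ closedBall (y t) r,
      ‖f t x - f t (y t) - A t (x - y t)‖ ≤ ε * ‖x - y t‖)
    (hA : ∀ t ∈ Icc t₀ T, ‖A t‖₊ ≤ L) (hε : 0 ≤ ε)
    (hy : ∀ t ≥ t₀, HasDerivAt y (f t (y t)) t) (hz : ∀ t ≥ t₀, HasDerivAt z (f t (z t)) t)
    (hδ : ∀ t ≥ t₀, HasDerivAt δ (A t (δ t)) t) (hδ₀ : δ t₀ = z t₀ - y t₀)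
    (hsmall : ‖z t₀ - y t₀‖ * exp (L * (T - t₀)) < r) (hT : t₀ ≤ T) :
    ‖z T - y T - δ T‖ ≤
      gronwallBound 0 L (ε * (‖z t₀ - y t₀‖ * exp (L * (T - t₀)))) (T - t₀) := by
  have htube := norm_sub_le_of_lipschitzOnWith_closedBall hlip hy hz hsmall
  have hnear (t : ℝ) (ht : t ∈ Icc t₀ T) :
      ‖z t - y t‖ ≤ ‖z t₀ - y t₀‖ * exp (L * (T - t₀)) :=
    (htube t ht).trans (by gcongr; exact ht.2)
  have hcont {x : ℝ → E} {x' : ℝ → E} (hx : ∀ t ≥ t₀, HasDerivAt x (x' t) t) :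
      ContinuousOn x (Icc t₀ T) := fun t ht => (hx t ht.1).continuousAt.continuousWithinAt
  have hgron := dist_le_of_approx_trajectories_ODE_of_mem (v := fun t => A t) (s := fun _ => univ)
    (δ := 0) (εf := ε * (‖z t₀ - y t₀‖ * exp (L * (T - t₀)))) (εg := 0)
    (fun t ht => ((A t).lipschitz.weaken (hA t ⟨ht.1, ht.2.le⟩)).lipschitzOnWith)
    ((hcont hz).sub (hcont hy)) (fun t ht => ((hz t ht.1).sub (hy t ht.1)).hasDerivWithinAt)
    (fun t ht => ?_) (fun _ _ => trivial)
    (hcont hδ) (fun t ht => (hδ t ht.1).hasDerivWithinAt) (fun t _ => (dist_self _).le)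
    (fun _ _ => trivial) (by simp [hδ₀]) T ⟨hT, le_rfl⟩
  · simpa [dist_eq_norm] using hgron
  · have ht' : t ∈ Icc t₀ T := ⟨ht.1, ht.2.le⟩
    rw [dist_eq_norm]
    exact (hlin t ht' _ (mem_closedBall_iff_norm.mpr ((hnear t ht').trans hsmall.le))).trans
      (mul_le_mul_of_nonneg_left (hnear t ht') hε)

theorem continuous_fderiv_of_contDiff_uncurry (hf : ContDiff ℝ 1 (Function.uncurry f)) :
    Continuous fun p : ℝ × E => fderiv ℝ (f p.1) p.2 :=
  (ContDiff.fderiv (f := fun (p : ℝ × E) x => f p.1 x) (n := 0)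
    (hf.comp (by fun_prop : ContDiff ℝ 1 fun q : (ℝ × E) × E => (q.1.1, q.2)))
    contDiff_snd le_rfl).continuous

theorem hasFDerivAt_of_contDiff_uncurry (hf : ContDiff ℝ 1 (Function.uncurry f)) (t : ℝ) (x : E) :
    HasFDerivAt (f t) (fderiv ℝ (f t) x) x :=
  ((hf.differentiable one_ne_zero (t, x)).comp x
    ((differentiableAt_const t).prodMk differentiableAt_id)).hasFDerivAt

theorem exists_pos_forall_norm_fderiv_sub_le (hf : ContDiff ℝ 1 (Function.uncurry f))
    (hy : ContinuousOn y (Icc t₀ T)) {ε : ℝ} (hε : 0 < ε) :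
    ∃ ρ > 0, ∀ t ∈ Icc t₀ T, ∀ x ∈ closedBall (y t) ρ,
      ‖fderiv ℝ (f t) x - fderiv ℝ (f t) (y t)‖ ≤ ε := by
  have hpath : ContinuousOn (fun t => (t, y t)) (Icc t₀ T) := continuousOn_id.prodMk hy
  obtain ⟨ρ, hρ, hnear⟩ := (isCompact_Icc.image_of_continuousOn hpath).exists_pos_forall_dist_lt
    (fun p _ => (continuous_fderiv_of_contDiff_uncurry hf).continuousAt) hε
  refine ⟨ρ / 2, half_pos hρ, fun t ht x hx => ?_⟩
  rw [← dist_eq_norm, dist_comm]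
  refine (hnear _ ⟨t, ht, rfl⟩ (t, x) ?_).le
  rw [Prod.dist_eq, dist_self, max_eq_right dist_nonneg, dist_comm]
  exact (mem_closedBall.mp hx).trans_lt (half_lt_self hρ)

theorem exists_pos_norm_sub_le_of_norm_variational_le [CompleteSpace E]
    (hf : ContDiff ℝ 1 (Function.uncurry f)) {K : ℝ} (hT : t₀ ≤ T)
    (hy : ∀ t ≥ t₀, HasDerivAt y (f t (y t)) t)
    (hvar : ∀ δ : ℝ → E, (∀ t ≥ t₀, HasDerivAt δ (fderiv ℝ (f t) (y t) (δ t)) t) →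
      ‖δ T‖ ≤ K * ‖δ t₀‖)
    {ε : ℝ} (hε : 0 < ε) :
    ∃ η > 0, ∀ z : ℝ → E, (∀ t ≥ t₀, HasDerivAt z (f t (z t)) t) → ‖z t₀ - y t₀‖ ≤ η →
      ‖z T - y T‖ ≤ (K + ε) * ‖z t₀ - y t₀‖ := by
  set A : ℝ × E → E →L[ℝ] E := fun p => fderiv ℝ (f p.1) p.2
  have hA : Continuous A := continuous_fderiv_of_contDiff_uncurry hf
  have hycont : ContinuousOn y (Ici t₀) := fun t ht => (hy t ht).continuousAt.continuousWithinAt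
  obtain ⟨M, hM⟩ : ∃ M, ∀ t ∈ Icc t₀ T, ‖A (t, y t)‖ ≤ M :=
    isCompact_Icc.exists_bound_of_continuousOn
      (hA.comp_continuousOn (continuousOn_id.prodMk (hycont.mono Icc_subset_Ici_self)))
  set L : ℝ≥0 := M.toNNReal + 1
  set e := exp (L * (T - t₀))
  set g := gronwallBound 0 L 1 (T - t₀)
  have hg : 0 ≤ g := by
    simpa [gronwallBound_x0] using gronwallBound_mono le_rfl zero_le_one L.coe_nonneg
      (sub_nonneg.mpr hT)
  -- `ε'` is small enough to absorb the Grönwall factor `e * g` and at most `1`, so that `L`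
  -- bounds `‖A (t, x)‖` on the whole tube
  set ε' := min 1 (ε / (e * g + 1))
  have hε' : 0 < ε' := lt_min one_pos (by positivity)
  obtain ⟨ρ, hρ, hAnear⟩ := exists_pos_forall_norm_fderiv_sub_le hf
    (hycont.mono Icc_subset_Ici_self) hε'
  have hlin (t : ℝ) (ht : t ∈ Icc t₀ T) (x : E) (hx : x ∈ closedBall (y t) ρ) :
      ‖f t x - f t (y t) - A (t, y t) (x - y t)‖ ≤ ε' * ‖x - y t‖ :=
    (convex_closedBall _ _).norm_image_sub_le_of_norm_hasFDerivWithin_le'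
      (fun x _ => (hasFDerivAt_of_contDiff_uncurry hf t x).hasFDerivWithinAt) (hAnear t ht)
      (mem_closedBall_self hρ.le) hx
  have hAL (t : ℝ) (ht : t ∈ Icc t₀ T) (x : E) (hx : x ∈ closedBall (y t) ρ) :
      ‖A (t, x)‖₊ ≤ L := by
    rw [← NNReal.coe_le_coe, coe_nnnorm, NNReal.coe_add, NNReal.coe_one]
    linarith [norm_le_insert' (A (t, x)) (A (t, y t)), hAnear t ht x hx, hM t ht,
      Real.le_coe_toNNReal M, min_le_left 1 (ε / (e * g + 1))]
  have hlip (t : ℝ) (ht : t ∈ Icc t₀ T) : LipschitzOnWith L (f t) (closedBall (y t) ρ) :=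
    (convex_closedBall _ _).lipschitzOnWith_of_nnnorm_hasFDerivWithin_le
      (fun x _ => (hasFDerivAt_of_contDiff_uncurry hf t x).hasFDerivWithinAt) (hAL t ht)
  refine ⟨ρ / (2 * e), by positivity, fun z hz hzy => ?_⟩
  set h := ‖z t₀ - y t₀‖
  have hsmall : h * e < ρ := by
    rw [le_div_iff₀ (by positivity)] at hzy
    linarith
  obtain ⟨δ, hδ₀, hδ⟩ := exists_forall_ge_hasDerivAt_clm_apply
    (hA.comp_continuousOn (continuousOn_id.prodMk hycont)) (z t₀ - y t₀)
  have herr := norm_sub_sub_le_gronwallBound hlip hlin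
    (fun t ht => hAL t ht _ (mem_closedBall_self hρ.le)) hε'.le hy hz hδ hδ₀ hsmall hT
  have hδT : ‖δ T‖ ≤ K * h := by
    have := hvar δ hδ
    rwa [hδ₀] at this
  have hε'eg : ε' * (e * g) ≤ ε := by
    calc ε' * (e * g) ≤ ε / (e * g + 1) * (e * g) := by gcongr; exact min_le_right _ _
      _ ≤ ε := by
        rw [div_mul_eq_mul_div, div_le_iff₀ (by positivity)]
        nlinarith
  calc ‖z T - y T‖ ≤ ‖δ T‖ + ‖z T - y T - δ T‖ := norm_le_insert' _ _
    _ ≤ K * h + ε' * (h * e) * g :=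
        add_le_add hδT (herr.trans_eq (gronwallBound_zero_eq_mul (by positivity) _ _))
    _ = K * h + ε' * (e * g) * h := by ring
    _ ≤ (K + ε) * h := by nlinarith [norm_nonneg (z t₀ - y t₀)]

end Trajectories

theorem stmt_2_general (n : ℕ)
    (f : ℝ → EuclideanSpace ℝ (Fin n) → EuclideanSpace ℝ (Fin n))
    (hf : ContDiff ℝ 2 (Function.uncurry f))
    (hcomplete : ∀ (t0 : ℝ) (x0 : EuclideanSpace ℝ (Fin n)),
      ∃ x : ℝ → EuclideanSpace ℝ (Fin n), x t0 = x0 ∧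
        ∀ t, t0 ≤ t → HasDerivAt x (f t (x t)) t)
    (k lam : ℝ)
    (hcontr : ∀ (t0 : ℝ) (x δ : ℝ → EuclideanSpace ℝ (Fin n)),
      (∀ t, t0 ≤ t → HasDerivAt x (f t (x t)) t) →
      (∀ t, t0 ≤ t → HasDerivAt δ ((fderiv ℝ (f t) (x t)) (δ t)) t) →
      ∀ t, t0 ≤ t → ‖δ t‖ ≤ k * Real.exp (-lam * (t - t0)) * ‖δ t0‖) :
    ∀ (t0 : ℝ) (x1 x2 : ℝ → EuclideanSpace ℝ (Fin n)),
      (∀ t, t0 ≤ t → HasDerivAt x1 (f t (x1 t)) t) →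
      (∀ t, t0 ≤ t → HasDerivAt x2 (f t (x2 t)) t) →
      ∀ t, t0 ≤ t →
        ‖x1 t - x2 t‖ ≤ k * Real.exp (-lam * (t - t0)) * ‖x1 t0 - x2 t0‖ := by
  intro t₀ x₁ x₂ hx₁ hx₂ T hT
  let Sol := {x : ℝ → EuclideanSpace ℝ (Fin n) // ∀ t, t₀ ≤ t → HasDerivAt x (f t (x t)) t}
  refine norm_sub_le_of_forall_exists_norm_sub_le (initial := fun x : Sol => x.1 t₀)
    (terminal := fun x : Sol => x.1 T) (fun x₀ => ?_) (fun y ε hε => ?_) ⟨x₁, hx₁⟩ ⟨x₂, hx₂⟩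
  · obtain ⟨x, hx₀, hx⟩ := hcomplete t₀ x₀
    exact ⟨⟨x, hx⟩, hx₀⟩
  · obtain ⟨η, hη, hclose⟩ := exists_pos_norm_sub_le_of_norm_variational_le
      (hf.of_le (by norm_num)) hT y.2 (fun δ hδ => hcontr t₀ y.1 δ y.2 hδ T hT) hε
    exact ⟨η, hη, fun z => hclose z.1 z.2⟩

/-- If a forward complete C² system `ẋ = f(t,x)` on ℝⁿ is contractive
(every solution of the linearized equation along any solution decays as
`‖δx(t)‖ ≤ k e^{-λ(t-t0)} ‖δx(t0)‖`), then it is incrementally exponentially stable. -/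
theorem stmt_2 (n : ℕ)
    (f : ℝ → EuclideanSpace ℝ (Fin n) → EuclideanSpace ℝ (Fin n))
    (hf : ContDiff ℝ 2 (Function.uncurry f))
    (hcomplete : ∀ (t0 : ℝ) (x0 : EuclideanSpace ℝ (Fin n)),
      ∃ x : ℝ → EuclideanSpace ℝ (Fin n), x t0 = x0 ∧
        ∀ t, t0 ≤ t → HasDerivAt x (f t (x t)) t)
    (k lam : ℝ) (hk : 0 < k) (hlam : 0 < lam)
    (hcontr : ∀ (t0 : ℝ) (x δ : ℝ → EuclideanSpace ℝ (Fin n)),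
      (∀ t, t0 ≤ t → HasDerivAt x (f t (x t)) t) →
      (∀ t, t0 ≤ t → HasDerivAt δ ((fderiv ℝ (f t) (x t)) (δ t)) t) →
      ∀ t, t0 ≤ t → ‖δ t‖ ≤ k * Real.exp (-lam * (t - t0)) * ‖δ t0‖) :
    ∀ (t0 : ℝ) (x1 x2 : ℝ → EuclideanSpace ℝ (Fin n)),
      (∀ t, t0 ≤ t → HasDerivAt x1 (f t (x1 t)) t) →
      (∀ t, t0 ≤ t → HasDerivAt x2 (f t (x2 t)) t) →
      ∀ t, t0 ≤ t →
        ‖x1 t - x2 t‖ ≤ k * Real.exp (-lam * (t - t0)) * ‖x1 t0 - x2 t0‖ :=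
  stmt_2_general n f hf hcomplete k lam hcontr
end

section
/- Let g : R → R be defined piecewise on intervals determined by a strictly increasing unbounded sequence (a_i)_{i∈Z} with a_{2i+1} - a_{2i} ≥ k > 0 and a_{2i+2} - a_{2i+1} ≤ L, by g(t) = e^{-(M+α)(t - a_{2i+1})} for t ∈ [a_{2i+1}, a_{2i+2}] and g(t) = ξ_{2i+2}(t - a_{2i+2}) + ζ_{2i+2} for t ∈ [a_{2i+2}, a_{2i+3}], where ζ_{2i+2} = e^{-(M+α)(a_{2i+2} - a_{2i+1})} and ξ_{2i+2} = (1 - ζ_{2i+2})/(a_{2i+3} - a_{2i+2}). Then e^{-(M+α)L} ≤ g(t) ≤ 1 for all t ∈ R, g is continuous, and its upper right derivative satisfies g'(t) ≤ -(M+α) g(t) on the open intervals (a_{2i+1}, a_{2i+2}) and g'(t) ≤ 1/k on [a_{2i+2}, a_{2i+3}]. -/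
open Filter Set

/-- Upper right Dini derivative. -/
noncomputable def diniDerivUR (f : ℝ → ℝ) (t : ℝ) : ℝ :=
  Filter.limsup (fun s => (f s - f t) / (s - t)) (nhdsWithin t (Set.Ioi t))

lemma dini_of_hasDerivAt {g f : ℝ → ℝ} {t c : ℝ}
    (hf : HasDerivAt f c t) (heq : ∀ᶠ s in nhdsWithin t (Set.Ioi t), g s = f s)
    (ht : g t = f t) : diniDerivUR g t = c := by
  have h1 : Tendsto (fun s => (f s - f t) / (s - t)) (nhdsWithin t (Set.Ioi t)) (nhds c) := by
    have h := hasDerivAt_iff_tendsto_slope.mp hf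
    have h' := h.mono_left (nhdsWithin_mono t (fun s hs => ne_of_gt hs))
    refine h'.congr (fun s => ?_)
    simp [slope_def_field, div_eq_div_iff]
  have h2 : Tendsto (fun s => (g s - g t) / (s - t)) (nhdsWithin t (Set.Ioi t)) (nhds c) := by
    refine h1.congr' ?_
    filter_upwards [heq] with s hs
    rw [hs, ht]
  exact h2.limsup_eq

lemma exists_j (a : ℤ → ℝ)
    (htop : Filter.Tendsto a Filter.atTop Filter.atTop)
    (hbot : Filter.Tendsto a Filter.atBot Filter.atBot) (t : ℝ) :
    ∃ j : ℤ, a j ≤ t ∧ t < a (j + 1) := by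
  obtain ⟨N, hN⟩ := Filter.eventually_atTop.mp (htop.eventually (eventually_gt_atTop t))
  have hbdd : ∃ b : ℤ, ∀ z : ℤ, a z ≤ t → z ≤ b := by
    refine ⟨N, fun z hz => ?_⟩
    by_contra h
    exact absurd (hN z (le_of_lt (lt_of_not_ge h))) (not_lt.mpr hz)
  have hinh : ∃ z : ℤ, a z ≤ t := by
    obtain ⟨z, hz⟩ := (hbot.eventually (eventually_le_atBot t)).exists
    exact ⟨z, hz⟩
  obtain ⟨b, hb⟩ := hbdd
  obtain ⟨j, hj, hmax⟩ := Int.exists_greatest_of_bdd ⟨b, fun z hz => hb z hz⟩ hinh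
  refine ⟨j, hj, ?_⟩
  by_contra h
  exact absurd (hmax (j+1) (not_lt.mp h)) (by omega)

lemma cwa_left {g f : ℝ → ℝ} {b c x : ℝ} (hf : Continuous f)
    (heq : ∀ s ∈ Set.Icc b c, g s = f s) (hb : b < x) (hx : x ∈ Set.Icc b c) :
    ContinuousWithinAt g (Set.Iic x) x := by
  refine (hf.continuousWithinAt).congr_of_eventuallyEq ?_ (heq x hx)
  filter_upwards [self_mem_nhdsWithin,
    ((eventually_gt_nhds hb).filter_mono nhdsWithin_le_nhds :
      ∀ᶠ s in nhdsWithin x (Set.Iic x), b < s)] with s hs1 hs2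
  exact heq s ⟨le_of_lt hs2, le_trans hs1 hx.2⟩

lemma cwa_right {g f : ℝ → ℝ} {b c x : ℝ} (hf : Continuous f)
    (heq : ∀ s ∈ Set.Icc b c, g s = f s) (hc : x < c) (hx : x ∈ Set.Icc b c) :
    ContinuousWithinAt g (Set.Ici x) x := by
  refine (hf.continuousWithinAt).congr_of_eventuallyEq ?_ (heq x hx)
  filter_upwards [self_mem_nhdsWithin,
    ((eventually_lt_nhds hc).filter_mono nhdsWithin_le_nhds :
      ∀ᶠ s in nhdsWithin x (Set.Ici x), s < c)] with s hs1 hs2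
  exact heq s ⟨le_trans hx.1 hs1, le_of_lt hs2⟩

lemma ca_mid {g f : ℝ → ℝ} {b c x : ℝ} (hf : Continuous f)
    (heq : ∀ s ∈ Set.Icc b c, g s = f s) (hx : x ∈ Set.Ioo b c) :
    ContinuousAt g x := by
  refine (hf.continuousAt).congr ?_
  filter_upwards [Ioo_mem_nhds hx.1 hx.2] with s hs
  exact (heq s (Set.Ioo_subset_Icc_self hs)).symm

/-- The piecewise function `g` (exponential on the "bad" intervals
`[a_{2i+1}, a_{2i+2}]`, affine on the "good" intervals `[a_{2i+2}, a_{2i+3}]`)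
satisfies `e^{-(M+α)L} ≤ g ≤ 1`, is continuous, and its upper right derivative
satisfies `g' ≤ -(M+α) g` on the open bad intervals and `g' ≤ 1/k` on the good ones. -/
theorem stmt_6 (M α k L : ℝ) (hM : 0 < M) (hα : 0 < α) (hk : 0 < k) (hL : 0 < L)
    (a : ℤ → ℝ) (hmono : StrictMono a)
    (htop : Filter.Tendsto a Filter.atTop Filter.atTop)
    (hbot : Filter.Tendsto a Filter.atBot Filter.atBot)
    (hgapk : ∀ i : ℤ, k ≤ a (2 * i + 1) - a (2 * i))
    (hgapL : ∀ i : ℤ, a (2 * i + 2) - a (2 * i + 1) ≤ L)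
    (g : ℝ → ℝ)
    (hg1 : ∀ i : ℤ, ∀ t ∈ Set.Icc (a (2 * i + 1)) (a (2 * i + 2)),
      g t = Real.exp (-(M + α) * (t - a (2 * i + 1))))
    (hg2 : ∀ i : ℤ, ∀ t ∈ Set.Icc (a (2 * i + 2)) (a (2 * i + 3)),
      g t = ((1 - Real.exp (-(M + α) * (a (2 * i + 2) - a (2 * i + 1)))) /
              (a (2 * i + 3) - a (2 * i + 2))) * (t - a (2 * i + 2)) +
            Real.exp (-(M + α) * (a (2 * i + 2) - a (2 * i + 1)))) :
    (∀ t : ℝ, Real.exp (-(M + α) * L) ≤ g t ∧ g t ≤ 1) ∧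
    Continuous g ∧
    (∀ i : ℤ, ∀ t ∈ Set.Ioo (a (2 * i + 1)) (a (2 * i + 2)),
      diniDerivUR g t ≤ -(M + α) * g t) ∧
    (∀ i : ℤ, ∀ t ∈ Set.Icc (a (2 * i + 2)) (a (2 * i + 3)),
      diniDerivUR g t ≤ 1 / k) := by
  have hMα : 0 < M + α := by linarith
  -- coverage
  have cover : ∀ t : ℝ, ∃ i : ℤ, t ∈ Set.Icc (a (2*i+1)) (a (2*i+2)) ∨
      t ∈ Set.Icc (a (2*i+2)) (a (2*i+3)) := by
    intro t
    obtain ⟨j, hj1, hj2⟩ := exists_j a htop hbot t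
    rcases Int.even_or_odd j with ⟨r, hr⟩ | ⟨m, hm⟩
    · refine ⟨r - 1, Or.inr ?_⟩
      have e1 : 2*(r-1)+2 = j := by omega
      have e2 : 2*(r-1)+3 = j+1 := by omega
      rw [e1, e2]
      exact ⟨hj1, hj2.le⟩
    · refine ⟨m, Or.inl ?_⟩
      have e1 : 2*m+1 = j := by omega
      have e2 : 2*m+2 = j+1 := by omega
      rw [e1, e2]
      exact ⟨hj1, hj2.le⟩
  -- bounds on ζ
  have hd12 : ∀ i : ℤ, 0 ≤ a (2*i+2) - a (2*i+1) :=
    fun i => sub_nonneg.mpr (hmono (by omega)).le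
  have zlow : ∀ i : ℤ, Real.exp (-(M+α)*L) ≤ Real.exp (-(M+α)*(a (2*i+2) - a (2*i+1))) := by
    intro i
    apply Real.exp_le_exp.mpr
    nlinarith [hgapL i, hd12 i]
  have zone : ∀ i : ℤ, Real.exp (-(M+α)*(a (2*i+2) - a (2*i+1))) ≤ 1 := by
    intro i
    rw [Real.exp_le_one_iff]
    nlinarith [hd12 i]
  -- part 1 : bounds
  have part1 : ∀ t : ℝ, Real.exp (-(M + α) * L) ≤ g t ∧ g t ≤ 1 := by
    intro t
    obtain ⟨i, ht | ht⟩ := cover t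
    · rw [hg1 i t ht]
      constructor
      · apply Real.exp_le_exp.mpr
        have h1 : t - a (2*i+1) ≤ L := by
          have := hgapL i; have := ht.2; linarith
        nlinarith [sub_nonneg.mpr ht.1]
      · rw [Real.exp_le_one_iff]
        nlinarith [sub_nonneg.mpr ht.1]
    · rw [hg2 i t ht]
      set ζ := Real.exp (-(M + α) * (a (2 * i + 2) - a (2 * i + 1))) with hζ
      have hd : 0 < a (2*i+3) - a (2*i+2) := sub_pos.mpr (hmono (by omega))
      have hζ1 : ζ ≤ 1 := zone i
      have hζ0 : 0 < ζ := Real.exp_pos _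
      have hξ : 0 ≤ (1 - ζ) / (a (2*i+3) - a (2*i+2)) :=
        div_nonneg (by linarith) hd.le
      constructor
      · have h1 : 0 ≤ (1 - ζ) / (a (2*i+3) - a (2*i+2)) * (t - a (2*i+2)) :=
          mul_nonneg hξ (sub_nonneg.mpr ht.1)
        have := zlow i
        linarith
      · have h1 : (1 - ζ) / (a (2*i+3) - a (2*i+2)) * (t - a (2*i+2)) ≤
            (1 - ζ) / (a (2*i+3) - a (2*i+2)) * (a (2*i+3) - a (2*i+2)) :=
          mul_le_mul_of_nonneg_left (by linarith [ht.2]) hξ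
        have h2 : (1 - ζ) / (a (2*i+3) - a (2*i+2)) * (a (2*i+3) - a (2*i+2)) = 1 - ζ :=
          div_mul_cancel₀ _ hd.ne'
        linarith
  -- formulas on each interval [a j, a (j+1)]
  have formula : ∀ j : ℤ, ∃ f : ℝ → ℝ, Continuous f ∧
      ∀ s ∈ Set.Icc (a j) (a (j+1)), g s = f s := by
    intro j
    rcases Int.even_or_odd j with ⟨r, hr⟩ | ⟨m, hm⟩
    · refine ⟨fun s => ((1 - Real.exp (-(M + α) * (a (2*(r-1)+2) - a (2*(r-1)+1)))) /
          (a (2*(r-1)+3) - a (2*(r-1)+2))) * (s - a (2*(r-1)+2)) +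
          Real.exp (-(M + α) * (a (2*(r-1)+2) - a (2*(r-1)+1))), by fun_prop, ?_⟩
      intro s hs
      have e1 : 2*(r-1)+2 = j := by omega
      have e2 : 2*(r-1)+3 = j+1 := by omega
      exact hg2 (r-1) s (by rw [e1, e2]; exact hs)
    · refine ⟨fun s => Real.exp (-(M + α) * (s - a (2*m+1))), by fun_prop, ?_⟩
      intro s hs
      have e1 : 2*m+1 = j := by omega
      have e2 : 2*m+2 = j+1 := by omega
      exact hg1 m s (by rw [e1, e2]; exact hs)
  -- part 2 : continuity
  have part2 : Continuous g := by
    refine continuous_iff_continuousAt.mpr fun x => ?_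
    obtain ⟨j, hj1, hj2⟩ := exists_j a htop hbot x
    obtain ⟨f, hfc, hfe⟩ := formula j
    rcases eq_or_lt_of_le hj1 with heq | hlt
    · obtain ⟨f', hfc', hfe'⟩ := formula (j-1)
      have ej : j - 1 + 1 = j := by omega
      rw [ej] at hfe'
      have hprev : a (j-1) < x := by rw [← heq]; exact hmono (by omega)
      rw [← continuousWithinAt_univ, ← Set.Iic_union_Ici (a := x)]
      exact (cwa_left hfc' hfe' hprev ⟨hprev.le, heq.ge⟩).union
        (cwa_right hfc hfe hj2 ⟨hj1, hj2.le⟩)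
    · exact ca_mid hfc hfe ⟨hlt, hj2⟩
  -- part 3 : bad intervals
  have part3 : ∀ i : ℤ, ∀ t ∈ Set.Ioo (a (2 * i + 1)) (a (2 * i + 2)),
      diniDerivUR g t ≤ -(M + α) * g t := by
    intro i t ht
    have h0 : HasDerivAt (fun s : ℝ => -(M+α)*(s - a (2*i+1))) (-(M+α)) t := by
      simpa using (((hasDerivAt_id t).sub_const (a (2*i+1))).const_mul (-(M+α)))
    have hder := h0.exp
    have heq : ∀ᶠ s in nhdsWithin t (Set.Ioi t),
        g s = Real.exp (-(M+α)*(s - a (2*i+1))) := by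
      filter_upwards [self_mem_nhdsWithin,
        ((eventually_lt_nhds ht.2).filter_mono nhdsWithin_le_nhds :
          ∀ᶠ s in nhdsWithin t (Set.Ioi t), s < a (2*i+2))] with s hs1 hs2
      exact hg1 i s ⟨le_of_lt (lt_trans ht.1 hs1), hs2.le⟩
    have hteq : g t = Real.exp (-(M+α)*(t - a (2*i+1))) :=
      hg1 i t (Set.Ioo_subset_Icc_self ht)
    rw [dini_of_hasDerivAt hder heq hteq, hteq]
    exact le_of_eq (mul_comm _ _)
  -- part 4 : good intervals
  have part4 : ∀ i : ℤ, ∀ t ∈ Set.Icc (a (2 * i + 2)) (a (2 * i + 3)),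
      diniDerivUR g t ≤ 1 / k := by
    intro i t ht
    set ζ := Real.exp (-(M + α) * (a (2 * i + 2) - a (2 * i + 1))) with hζ
    have hd : 0 < a (2*i+3) - a (2*i+2) := sub_pos.mpr (hmono (by omega))
    have hk3 : k ≤ a (2*i+3) - a (2*i+2) := by
      have h := hgapk (i+1)
      have e1 : 2*(i+1)+1 = 2*i+3 := by ring
      have e2 : 2*(i+1) = 2*i+2 := by ring
      rw [e1, e2] at h
      exact h
    rcases eq_or_lt_of_le ht.2 with hE | hlt
    · -- t = a (2*i+3): right endpoint, next exponential piece
      have e1 : 2*(i+1)+1 = 2*i+3 := by ring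
      have e2 : 2*(i+1)+2 = 2*i+4 := by ring
      have hg1' := hg1 (i+1)
      rw [e1, e2] at hg1'
      have h0 : HasDerivAt (fun s : ℝ => -(M+α)*(s - a (2*i+3))) (-(M+α)) t := by
        simpa using (((hasDerivAt_id t).sub_const (a (2*i+3))).const_mul (-(M+α)))
      have hder := h0.exp
      have hnext : t < a (2*i+4) := by rw [hE]; exact hmono (by omega)
      have heq : ∀ᶠ s in nhdsWithin t (Set.Ioi t),
          g s = Real.exp (-(M+α)*(s - a (2*i+3))) := by
        filter_upwards [self_mem_nhdsWithin,
          ((eventually_lt_nhds hnext).filter_mono nhdsWithin_le_nhds :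
            ∀ᶠ s in nhdsWithin t (Set.Ioi t), s < a (2*i+4))] with s hs1 hs2
        exact hg1' s ⟨by rw [← hE]; exact hs1.le, hs2.le⟩
      have hteq : g t = Real.exp (-(M+α)*(t - a (2*i+3))) :=
        hg1' t ⟨hE.ge, hnext.le⟩
      rw [dini_of_hasDerivAt hder heq hteq]
      have h1 : Real.exp (-(M+α)*(t - a (2*i+3))) * (-(M+α)) < 0 :=
        mul_neg_of_pos_of_neg (Real.exp_pos _) (by linarith)
      have h2 : 0 < 1 / k := by positivity
      linarith
    · -- t < a (2*i+3): affine piece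
      have h0 : HasDerivAt
          (fun s : ℝ => (1 - ζ) / (a (2*i+3) - a (2*i+2)) * (s - a (2*i+2)) + ζ)
          ((1 - ζ) / (a (2*i+3) - a (2*i+2))) t := by
        simpa using ((((hasDerivAt_id t).sub_const (a (2*i+2))).const_mul
          ((1 - ζ) / (a (2*i+3) - a (2*i+2)))).add_const ζ)
      have heq : ∀ᶠ s in nhdsWithin t (Set.Ioi t),
          g s = (1 - ζ) / (a (2*i+3) - a (2*i+2)) * (s - a (2*i+2)) + ζ := by
        filter_upwards [self_mem_nhdsWithin,
          ((eventually_lt_nhds hlt).filter_mono nhdsWithin_le_nhds :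
            ∀ᶠ s in nhdsWithin t (Set.Ioi t), s < a (2*i+3))] with s hs1 hs2
        exact hg2 i s ⟨le_trans ht.1 hs1.le, hs2.le⟩
      have hteq : g t = (1 - ζ) / (a (2*i+3) - a (2*i+2)) * (t - a (2*i+2)) + ζ :=
        hg2 i t ht
      rw [dini_of_hasDerivAt h0 heq hteq]
      rw [div_le_div_iff₀ hd hk]
      have hζ0 : 0 < ζ := Real.exp_pos _
      nlinarith
  exact ⟨part1, part2, part3, part4⟩
end

section
/- If a T-periodic C^2 system ẋ = f(t, x) (f(t+T, x) = f(t, x)) is incrementally exponentially stable and forward complete, then for every t0 there exists a unique T-periodic solution η : [t0, ∞) → R^n, and every solution x satisfies |x(t) - η(t)| ≤ k e^{-λ(t - t0)} |x(t0) - η(t0)| for all t ≥ t0. -/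
/-!
Incremental stability makes solutions unique and makes the time-`mT` flow map from `t0` a
contraction once `k e^{-λ m T} < 1`. Periodicity of `f` turns the time-`mT` map into the `m`-th
iterate of the time-`T` (Poincaré) map, so the Banach fixed point of the iterate is a fixed point of
the Poincaré map, i.e. the initial value of a `T`-periodic solution; conversely the initial value of
any periodic solution is such a fixed point, which gives uniqueness.
-/

open Function Real Filter Topology

variable {E : Type*} [NormedAddCommGroup E] [NormedSpace ℝ E]

def IsSolutionFrom (f : ℝ → E → E) (t0 : ℝ) (x : ℝ → E) : Prop :=
  ∀ t, t0 ≤ t → HasDerivAt x (f t (x t)) t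

def IsIncrExpStable (f : ℝ → E → E) (k lam : ℝ) : Prop :=
  ∀ (t0 : ℝ) (x1 x2 : ℝ → E), IsSolutionFrom f t0 x1 → IsSolutionFrom f t0 x2 →
    ∀ t, t0 ≤ t → ‖x1 t - x2 t‖ ≤ k * exp (-lam * (t - t0)) * ‖x1 t0 - x2 t0‖

namespace IsSolutionFrom

variable {f : ℝ → E → E} {t0 : ℝ} {x : ℝ → E}

theorem mono (hx : IsSolutionFrom f t0 x) {t1 : ℝ} (ht : t0 ≤ t1) : IsSolutionFrom f t1 x :=
  fun t h => hx t (ht.trans h)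

theorem comp_add_const {τ : ℝ} (hx : IsSolutionFrom f t0 x) (hf : Periodic f τ) :
    IsSolutionFrom f (t0 - τ) (fun s => x (s + τ)) := by
  intro t ht
  have hshift := (hx (t + τ) (by linarith)).comp_add_const t τ
  rwa [hf t] at hshift

end IsSolutionFrom

namespace IsIncrExpStable

variable {f : ℝ → E → E} {k lam t0 : ℝ}

theorem eqOn_of_eq (hs : IsIncrExpStable f k lam) {x1 x2 : ℝ → E}
    (h1 : IsSolutionFrom f t0 x1) (h2 : IsSolutionFrom f t0 x2) (h0 : x1 t0 = x2 t0) :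
    Set.EqOn x1 x2 (Set.Ici t0) := by
  intro t ht
  have h := hs t0 x1 x2 h1 h2 t ht
  rw [h0, sub_self, norm_zero, mul_zero] at h
  exact sub_eq_zero.mp (norm_le_zero_iff.mp h)

variable (hs : IsIncrExpStable f k lam) {sol : E → ℝ → E}
  (hsol0 : ∀ x0, sol x0 t0 = x0) (hsol : ∀ x0, IsSolutionFrom f t0 (sol x0))
include hs hsol0 hsol

theorem flow_add {τ : ℝ} (hf : Periodic f τ) (hτ : 0 ≤ τ) (x0 : E) {t : ℝ} (ht : t0 ≤ t) :
    sol (sol x0 (t0 + τ)) t = sol x0 (t + τ) := by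
  have hshift : IsSolutionFrom f t0 (fun s => sol x0 (s + τ)) :=
    ((hsol x0).comp_add_const hf).mono (by linarith)
  exact hs.eqOn_of_eq (hsol _) hshift (hsol0 _) ht

theorem iterate_flow {T : ℝ} (hf : Periodic f T) (hT : 0 ≤ T) (m : ℕ) (x0 : E) :
    (fun y => sol y (t0 + T))^[m] x0 = sol x0 (t0 + m * T) := by
  induction m with
  | zero => simp [hsol0]
  | succ m ih =>
    rw [iterate_succ_apply', ih,
      hs.flow_add hsol0 hsol (hf.nat_mul m) (by positivity) x0 (by linarith)]
    push_cast
    ring_nf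

theorem contractingWith_iterate_flow {T : ℝ} (hf : Periodic f T) (hT : 0 ≤ T) {m : ℕ}
    (hm : k * exp (-lam * (m * T)) < 1) :
    ContractingWith (k * exp (-lam * (m * T))).toNNReal (fun y => sol y (t0 + T))^[m] := by
  refine ⟨toNNReal_lt_one.mpr hm, LipschitzWith.of_dist_le_mul fun x0 y0 => ?_⟩
  rw [hs.iterate_flow hsol0 hsol hf hT, hs.iterate_flow hsol0 hsol hf hT, dist_eq_norm,
    dist_eq_norm]
  calc ‖sol x0 (t0 + m * T) - sol y0 (t0 + m * T)‖
      ≤ k * exp (-lam * (t0 + m * T - t0)) * ‖sol x0 t0 - sol y0 t0‖ :=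
        hs t0 _ _ (hsol x0) (hsol y0) _ (le_add_of_nonneg_right (by positivity))
    _ ≤ _ := by
      rw [add_sub_cancel_left, hsol0, hsol0]
      gcongr
      exact le_coe_toNNReal _

theorem periodic_of_isFixedPt {T : ℝ} (hf : Periodic f T) (hT : 0 ≤ T) {x0 : E}
    (hx0 : IsFixedPt (fun y => sol y (t0 + T)) x0) {t : ℝ} (ht : t0 ≤ t) :
    sol x0 (t + T) = sol x0 t := by
  rw [← hs.flow_add hsol0 hsol hf hT x0 ht, hx0.eq]

theorem isFixedPt_of_periodic {T : ℝ} (hT : 0 ≤ T) {η : ℝ → E} (hη : IsSolutionFrom f t0 η)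
    (hper : ∀ t, t0 ≤ t → η (t + T) = η t) :
    IsFixedPt (fun y => sol y (t0 + T)) (η t0) := by
  show sol (η t0) (t0 + T) = η t0
  rw [hs.eqOn_of_eq (hsol _) hη (hsol0 _) (show t0 ≤ t0 + T by linarith), hper t0 le_rfl]

end IsIncrExpStable

theorem exists_nat_mul_exp_neg_mul_lt_one (k : ℝ) {lam T : ℝ} (hlam : 0 < lam) (hT : 0 < T) :
    ∃ m : ℕ, k * exp (-lam * (m * T)) < 1 := by
  have hgrow : Tendsto (fun m : ℕ => lam * (m * T)) atTop atTop :=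
    (tendsto_natCast_atTop_atTop.atTop_mul_const hT).const_mul_atTop hlam
  have hlim : Tendsto (fun m : ℕ => k * exp (-lam * (m * T))) atTop (𝓝 (k * 0)) := by
    simpa only [neg_mul, comp_def] using (tendsto_exp_neg_atTop_nhds_zero.comp hgrow).const_mul k
  rw [mul_zero] at hlim
  exact (hlim.eventually (gt_mem_nhds one_pos)).exists

theorem stmt_14_general (n : ℕ)
    (f : ℝ → EuclideanSpace ℝ (Fin n) → EuclideanSpace ℝ (Fin n))
    (T : ℝ) (hT : 0 < T) (hper : ∀ t x, f (t + T) x = f t x)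
    (hcomplete : ∀ (t0 : ℝ) (x0 : EuclideanSpace ℝ (Fin n)),
      ∃ x : ℝ → EuclideanSpace ℝ (Fin n), x t0 = x0 ∧
        ∀ t, t0 ≤ t → HasDerivAt x (f t (x t)) t)
    (k lam : ℝ) (hlam : 0 < lam)
    (hIES : ∀ (t0 : ℝ) (x1 x2 : ℝ → EuclideanSpace ℝ (Fin n)),
      (∀ t, t0 ≤ t → HasDerivAt x1 (f t (x1 t)) t) →
      (∀ t, t0 ≤ t → HasDerivAt x2 (f t (x2 t)) t) →
      ∀ t, t0 ≤ t →
        ‖x1 t - x2 t‖ ≤ k * Real.exp (-lam * (t - t0)) * ‖x1 t0 - x2 t0‖) :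
    ∀ t0 : ℝ, ∃ η : ℝ → EuclideanSpace ℝ (Fin n),
      (∀ t, t0 ≤ t → HasDerivAt η (f t (η t)) t) ∧
      (∀ t, t0 ≤ t → η (t + T) = η t) ∧
      (∀ x : ℝ → EuclideanSpace ℝ (Fin n),
        (∀ t, t0 ≤ t → HasDerivAt x (f t (x t)) t) →
        ∀ t, t0 ≤ t →
          ‖x t - η t‖ ≤ k * Real.exp (-lam * (t - t0)) * ‖x t0 - η t0‖) ∧
      (∀ η' : ℝ → EuclideanSpace ℝ (Fin n),
        (∀ t, t0 ≤ t → HasDerivAt η' (f t (η' t)) t) →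
        (∀ t, t0 ≤ t → η' (t + T) = η' t) →
        ∀ t, t0 ≤ t → η' t = η t) := by
  intro t0
  choose sol hsol0 hsol using hcomplete t0
  have hs : IsIncrExpStable f k lam := hIES
  have hf : Periodic f T := fun t => funext (hper t)
  obtain ⟨m, hm⟩ := exists_nat_mul_exp_neg_mul_lt_one k hlam hT
  have hC := hs.contractingWith_iterate_flow hsol0 hsol hf hT.le hm
  have hfix := hC.isFixedPt_fixedPoint_iterate
  refine ⟨sol _, hsol _, fun t => hs.periodic_of_isFixedPt hsol0 hsol hf hT.le hfix,
    fun x hx => hIES t0 x _ hx (hsol _), fun η hη hηper => ?_⟩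
  have hη0 : η t0 = _ := hC.fixedPoint_unique'
    ((hs.isFixedPt_of_periodic hsol0 hsol hT.le hη hηper).iterate m) (hfix.iterate m)
  exact hs.eqOn_of_eq hη (hsol _) (by rw [hη0, hsol0])

/-- A `T`-periodic, forward complete, C² system that is incrementally
exponentially stable admits, for every `t0`, a unique `T`-periodic solution `η` on
`[t0, ∞)`, toward which every solution converges exponentially. -/
theorem stmt_14 (n : ℕ)
    (f : ℝ → EuclideanSpace ℝ (Fin n) → EuclideanSpace ℝ (Fin n))
    (hf : ContDiff ℝ 2 (Function.uncurry f))
    (T : ℝ) (hT : 0 < T) (hper : ∀ t x, f (t + T) x = f t x)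
    (hcomplete : ∀ (t0 : ℝ) (x0 : EuclideanSpace ℝ (Fin n)),
      ∃ x : ℝ → EuclideanSpace ℝ (Fin n), x t0 = x0 ∧
        ∀ t, t0 ≤ t → HasDerivAt x (f t (x t)) t)
    (k lam : ℝ) (hk : 0 < k) (hlam : 0 < lam)
    (hIES : ∀ (t0 : ℝ) (x1 x2 : ℝ → EuclideanSpace ℝ (Fin n)),
      (∀ t, t0 ≤ t → HasDerivAt x1 (f t (x1 t)) t) →
      (∀ t, t0 ≤ t → HasDerivAt x2 (f t (x2 t)) t) →
      ∀ t, t0 ≤ t →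
        ‖x1 t - x2 t‖ ≤ k * Real.exp (-lam * (t - t0)) * ‖x1 t0 - x2 t0‖) :
    ∀ t0 : ℝ, ∃ η : ℝ → EuclideanSpace ℝ (Fin n),
      (∀ t, t0 ≤ t → HasDerivAt η (f t (η t)) t) ∧
      (∀ t, t0 ≤ t → η (t + T) = η t) ∧
      (∀ x : ℝ → EuclideanSpace ℝ (Fin n),
        (∀ t, t0 ≤ t → HasDerivAt x (f t (x t)) t) →
        ∀ t, t0 ≤ t →
          ‖x t - η t‖ ≤ k * Real.exp (-lam * (t - t0)) * ‖x t0 - η t0‖) ∧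
      (∀ η' : ℝ → EuclideanSpace ℝ (Fin n),
        (∀ t, t0 ≤ t → HasDerivAt η' (f t (η' t)) t) →
        (∀ t, t0 ≤ t → η' (t + T) = η' t) →
        ∀ t, t0 ≤ t → η' t = η t) :=
  stmt_14_general n f T hT hper hcomplete k lam hlam hIES
end

section
/- Let x(·) and δx(·) satisfy δ̇x(t) = J(t) δx(t) with J continuous, and suppose J(t) + J(t)^T ≤ M I_n on a union D1 of intervals whose total lengths are each at most L, and J(t) + J(t)^T ≤ -2c I_n on the complementary intervals each of length at least k, where the intervals alternate, and c k > M L + α(k + L)/1 for some α > 0. Then |δx(t)| ≤ K e^{-λ(t - t0)} |δx(t0)| for some K, λ > 0 independent of the solution. -/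
/-!
For `V = |δ|²` one has `V' = δ ⬝ (J + Jᵀ) δ`, so by Grönwall `V` decays at rate `2c` on good
intervals and grows at rate at most `M` on bad ones. For `W t = e^{2αt} V t` these rates become
`-2(c - α) ≤ 0` and `M + 2α`; the rate condition gives `(M + 2α) L ≤ 2 (c - α) k`, so `W` is
nonincreasing along the nodes `a (2i)`, while inside one good–bad pair it grows by a factor at most
`C = e^{(M + 2α) L}`. Two times are separated by whole pairs plus two partial ones, hence
`W t ≤ C² W t₀`, i.e. `|δ t| ≤ C e^{-α (t - t₀)} |δ t₀|`.
-/

open Matrix Real Set Filter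

section ExpGrowth

def HasExpGrowthOn (W : ℝ → ℝ) (m : ℝ) (S : Set ℝ) : Prop :=
  ∀ ⦃s⦄, s ∈ S → ∀ ⦃u⦄, u ∈ S → s ≤ u → W u ≤ exp (m * (u - s)) * W s

variable {W : ℝ → ℝ} {m m₁ m₂ : ℝ} {S : Set ℝ}

theorem HasExpGrowthOn.exp_mul (hW : HasExpGrowthOn W m S) (β : ℝ) :
    HasExpGrowthOn (fun t => exp (β * t) * W t) (m + β) S := by
  intro s hs u hu hsu
  calc exp (β * u) * W u
      ≤ exp (β * u) * (exp (m * (u - s)) * W s) := by gcongr; exact hW hs hu hsu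
    _ = exp ((m + β) * (u - s)) * (exp (β * s) * W s) := by
      rw [← mul_assoc, ← mul_assoc, ← exp_add, ← exp_add]; ring_nf

theorem HasExpGrowthOn.le_of_Icc_of_Icc {p q r s u : ℝ}
    (h₁ : HasExpGrowthOn W m₁ (Icc p q)) (h₂ : HasExpGrowthOn W m₂ (Icc q r))
    (hs : s ∈ Icc p q) (hu : u ∈ Icc q r) :
    W u ≤ exp (m₂ * (u - q) + m₁ * (q - s)) * W s := by
  have hq₁ : q ∈ Icc p q := ⟨hs.1.trans hs.2, le_rfl⟩
  have hq₂ : q ∈ Icc q r := ⟨le_rfl, hu.1.trans hu.2⟩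
  calc W u ≤ exp (m₂ * (u - q)) * W q := h₂ hq₂ hu hu.1
    _ ≤ exp (m₂ * (u - q)) * (exp (m₁ * (q - s)) * W s) := by gcongr; exact h₁ hs hq₁ hs.2
    _ = exp (m₂ * (u - q) + m₁ * (q - s)) * W s := by rw [exp_add]; ring

theorem HasExpGrowthOn.le_exp_mul_of_Icc_of_Icc {p q r s u L : ℝ} (hW₀ : ∀ t, 0 ≤ W t)
    (h₁ : HasExpGrowthOn W m₁ (Icc p q)) (h₂ : HasExpGrowthOn W m₂ (Icc q r))
    (hm₁ : m₁ ≤ 0) (hm₂ : 0 ≤ m₂) (hL : 0 ≤ L) (hqr : r - q ≤ L)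
    (hps : p ≤ s) (hsu : s ≤ u) (hur : u ≤ r) :
    W u ≤ exp (m₂ * L) * W s := by
  rcases le_or_gt u q with huq | hqu
  · calc W u ≤ exp (m₁ * (u - s)) * W s := h₁ ⟨hps, hsu.trans huq⟩ ⟨hps.trans hsu, huq⟩ hsu
      _ ≤ exp (m₂ * L) * W s :=
        mul_le_mul_of_nonneg_right (exp_le_exp.mpr (by nlinarith)) (hW₀ s)
  rcases le_or_gt q s with hqs | hsq
  · calc W u ≤ exp (m₂ * (u - s)) * W s := h₂ ⟨hqs, hsu.trans hur⟩ ⟨hqs.trans hsu, hur⟩ hsu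
      _ ≤ exp (m₂ * L) * W s :=
        mul_le_mul_of_nonneg_right (exp_le_exp.mpr (by nlinarith)) (hW₀ s)
  · calc W u ≤ exp (m₂ * (u - q) + m₁ * (q - s)) * W s :=
          h₁.le_of_Icc_of_Icc h₂ ⟨hps, hsq.le⟩ ⟨hqu.le, hur⟩
      _ ≤ exp (m₂ * L) * W s :=
        mul_le_mul_of_nonneg_right (exp_le_exp.mpr (by nlinarith)) (hW₀ s)

end ExpGrowth

section LinearODE

variable {ι : Type*} [Fintype ι]

theorem dotProduct_add_transpose_mulVec (A : Matrix ι ι ℝ) (v : ι → ℝ) :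
    v ⬝ᵥ (A + Aᵀ) *ᵥ v = 2 * (v ⬝ᵥ A *ᵥ v) := by
  rw [add_mulVec, dotProduct_add, mulVec_transpose, dotProduct_mulVec, dotProduct_comm]
  ring

theorem HasDerivAt.dotProduct_self {δ : ℝ → ι → ℝ} {δ' : ι → ℝ} {t : ℝ}
    (h : HasDerivAt δ δ' t) : HasDerivAt (fun t => δ t ⬝ᵥ δ t) (2 * (δ t ⬝ᵥ δ')) t := by
  have hcoord : ∀ i ∈ Finset.univ, HasDerivAt (fun t => δ t i * δ t i)
      (δ' i * δ t i + δ t i * δ' i) t :=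
    fun i _ => (hasDerivAt_pi.mp h i).mul (hasDerivAt_pi.mp h i)
  refine (HasDerivAt.fun_sum hcoord).congr_deriv ?_
  simp only [dotProduct, Finset.mul_sum]
  exact Finset.sum_congr rfl fun i _ => by ring

-- Grönwall's inequality for `|δ|²`, whose derivative is `δ ⬝ (J + Jᵀ) δ`.
theorem hasExpGrowthOn_dotProduct_self {J : ℝ → Matrix ι ι ℝ} {δ : ℝ → ι → ℝ} {m p q : ℝ}
    (hδ : ∀ t ∈ Icc p q, HasDerivAt δ (J t *ᵥ δ t) t)
    (hJ : ∀ t ∈ Icc p q, ∀ v, v ⬝ᵥ (J t + (J t)ᵀ) *ᵥ v ≤ m * (v ⬝ᵥ v)) :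
    HasExpGrowthOn (fun t => δ t ⬝ᵥ δ t) m (Icc p q) := by
  intro s hs u hu hsu
  have hsub : Icc s u ⊆ Icc p q := Icc_subset_Icc hs.1 hu.2
  have hV := fun t (ht : t ∈ Icc s u) => (hδ t (hsub ht)).dotProduct_self
  have := le_gronwallBound_of_liminf_deriv_right_le (ε := 0)
    (fun t ht => (hV t ht).continuousAt.continuousWithinAt)
    (fun t ht _ hr => (hV t (Ico_subset_Icc_self ht)).hasDerivWithinAt.liminf_right_slope_le hr)
    le_rfl
    (fun t ht => by
      rw [add_zero, ← dotProduct_add_transpose_mulVec]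
      exact hJ t (hsub (Ico_subset_Icc_self ht)) (δ t))
    u ⟨hsu, le_rfl⟩
  rwa [gronwallBound_ε0, mul_comm] at this

end LinearODE

section Chaining

variable {α : Type*} [LinearOrder α]

theorem exists_mem_Ico_of_tendsto [NoMaxOrder α] {b : ℤ → α}
    (htop : Tendsto b atTop atTop) (hbot : Tendsto b atBot atBot) (t : α) :
    ∃ i, t ∈ Ico (b i) (b (i + 1)) := by
  classical
  obtain ⟨m, hm⟩ := eventually_atTop.mp (htop.eventually_gt_atTop t)
  obtain ⟨l, hl⟩ := eventually_atBot.mp (hbot.eventually_le_atBot t)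
  obtain ⟨i, hi, hmax⟩ := Int.exists_greatest_of_bdd (P := fun i => b i ≤ t)
    ⟨m, fun z hz => by by_contra! h; exact (hm z h.le).not_ge hz⟩ ⟨l, hl l le_rfl⟩
  refine ⟨i, hi, lt_of_not_ge fun h => ?_⟩
  exact (lt_add_one i).not_ge (hmax _ h)

theorem le_sq_mul_of_antitone_comp_of_le_mul {b : ℤ → α} {W : α → ℝ} {C : ℝ}
    (hb : Monotone b) (hcover : ∀ t, ∃ i, t ∈ Ico (b i) (b (i + 1)))
    (hW₀ : ∀ t, 0 ≤ W t) (hC : 1 ≤ C) (hanti : Antitone (W ∘ b))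
    (hloc : ∀ i s u, b i ≤ s → s ≤ u → u ≤ b (i + 1) → W u ≤ C * W s)
    {s u : α} (hsu : s ≤ u) : W u ≤ C ^ 2 * W s := by
  obtain ⟨i, hs⟩ := hcover s
  have hCs : C * W s ≤ C ^ 2 * W s := by
    rw [sq, mul_assoc]
    exact le_mul_of_one_le_left (mul_nonneg (by linarith) (hW₀ s)) hC
  rcases le_or_gt u (b (i + 1)) with hu | hu
  · exact (hloc i s u hs.1 hsu hu).trans hCs
  obtain ⟨j, hj⟩ := hcover u
  have hij : i + 1 ≤ j := by
    by_contra! h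
    exact (hj.2.trans_le (hb (by omega : j + 1 ≤ i + 1))).not_ge hu.le
  calc W u ≤ C * W (b j) := hloc j _ u le_rfl hj.1 hj.2.le
    _ ≤ C * W (b (i + 1)) := mul_le_mul_of_nonneg_left (hanti hij) (by linarith)
    _ ≤ C * (C * W s) :=
      mul_le_mul_of_nonneg_left (hloc i s _ hs.1 hs.2.le le_rfl) (by linarith)
    _ = C ^ 2 * W s := by ring

end Chaining

theorem sqrt_le_mul_exp_mul_sqrt {x y K α t₀ t : ℝ} (hK : 0 ≤ K)
    (h : exp (2 * α * t) * x ≤ K ^ 2 * (exp (2 * α * t₀) * y)) :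
    √x ≤ K * exp (-α * (t - t₀)) * √y := by
  have hx : x ≤ (K * exp (-α * (t - t₀))) ^ 2 * y := by
    have hexp : exp (-α * (t - t₀)) ^ 2 = exp (-(2 * α * t)) * exp (2 * α * t₀) := by
      rw [← exp_nat_mul, ← exp_add]; ring_nf
    calc x = exp (-(2 * α * t)) * (exp (2 * α * t) * x) := by
          rw [← mul_assoc, ← exp_add, neg_add_cancel, exp_zero, one_mul]
      _ ≤ exp (-(2 * α * t)) * (K ^ 2 * (exp (2 * α * t₀) * y)) := by gcongr
      _ = (K * exp (-α * (t - t₀))) ^ 2 * y := by rw [mul_pow, hexp]; ring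
  calc √x ≤ √((K * exp (-α * (t - t₀))) ^ 2 * y) := sqrt_le_sqrt hx
    _ = K * exp (-α * (t - t₀)) * √y := by
      rw [sqrt_mul (sq_nonneg _), sqrt_sq (by positivity)]

theorem stmt_16_general (n : ℕ) (J : ℝ → Matrix (Fin n) (Fin n) ℝ)
    (M L c k α : ℝ) (hM : 0 < M) (hL : 0 < L) (hk : 0 < k) (hα : 0 < α)
    (a : ℤ → ℝ) (hmono : StrictMono a)
    (htop : Filter.Tendsto a Filter.atTop Filter.atTop)
    (hbot : Filter.Tendsto a Filter.atBot Filter.atBot)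
    (hgood_len : ∀ i : ℤ, k ≤ a (2 * i + 1) - a (2 * i))
    (hbad_len : ∀ i : ℤ, a (2 * i + 2) - a (2 * i + 1) ≤ L)
    (hgood : ∀ i : ℤ, ∀ t ∈ Set.Icc (a (2 * i)) (a (2 * i + 1)), ∀ v : Fin n → ℝ,
      v ⬝ᵥ (J t + (J t)ᵀ).mulVec v ≤ -2 * c * (v ⬝ᵥ v))
    (hbad : ∀ i : ℤ, ∀ t ∈ Set.Icc (a (2 * i + 1)) (a (2 * i + 2)), ∀ v : Fin n → ℝ,
      v ⬝ᵥ (J t + (J t)ᵀ).mulVec v ≤ M * (v ⬝ᵥ v))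
    (hrate : M * L + α * (k + L) < c * k) :
    ∃ K lam : ℝ, 0 < K ∧ 0 < lam ∧
      ∀ δ : ℝ → Fin n → ℝ, (∀ t, HasDerivAt δ ((J t).mulVec (δ t)) t) →
        ∀ t0 t : ℝ, t0 ≤ t →
          Real.sqrt (∑ i, (δ t i) ^ 2) ≤
            K * Real.exp (-lam * (t - t0)) * Real.sqrt (∑ i, (δ t0 i) ^ 2) := by
  have hcα : α < c := by nlinarith
  refine ⟨exp ((M + 2 * α) * L), α, exp_pos _, hα, fun δ hδ t0 t ht => ?_⟩
  set W : ℝ → ℝ := fun u => exp (2 * α * u) * (δ u ⬝ᵥ δ u)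
  have hW₀ (u : ℝ) : 0 ≤ W u :=
    mul_nonneg (exp_pos _).le (Finset.sum_nonneg fun i _ => mul_self_nonneg _)
  have hgoodW (i : ℤ) : HasExpGrowthOn W (-2 * c + 2 * α) (Icc (a (2 * i)) (a (2 * i + 1))) :=
    (hasExpGrowthOn_dotProduct_self (fun t _ => hδ t) (hgood i)).exp_mul (2 * α)
  have hbadW (i : ℤ) : HasExpGrowthOn W (M + 2 * α) (Icc (a (2 * i + 1)) (a (2 * i + 2))) :=
    (hasExpGrowthOn_dotProduct_self (fun t _ => hδ t) (hbad i)).exp_mul (2 * α)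
  have htwo : ∀ i : ℤ, 2 * (i + 1) = 2 * i + 2 := fun i => by ring
  have hanti : Antitone (W ∘ fun i => a (2 * i)) := antitone_int_of_succ_le fun i => by
    have hpair := (hgoodW i).le_of_Icc_of_Icc (hbadW i)
      (left_mem_Icc.2 (hmono (by omega)).le) (right_mem_Icc.2 (hmono (by omega)).le)
    simp only [Function.comp_apply, htwo]
    refine hpair.trans (mul_le_of_le_one_left (hW₀ _) (exp_le_one_iff.2 ?_))
    nlinarith [mul_le_mul_of_nonneg_left (hbad_len i) (by positivity : 0 ≤ M + 2 * α),
      mul_le_mul_of_nonneg_left (hgood_len i) (by linarith : 0 ≤ c - α)]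
  have hloc (i : ℤ) (s u : ℝ) (hs : a (2 * i) ≤ s) (hsu : s ≤ u) (hu : u ≤ a (2 * (i + 1))) :
      W u ≤ exp ((M + 2 * α) * L) * W s :=
    (hgoodW i).le_exp_mul_of_Icc_of_Icc hW₀ (hbadW i) (by linarith) (by linarith) hL.le
      (hbad_len i) hs hsu (htwo i ▸ hu)
  have hcover := exists_mem_Ico_of_tendsto (b := fun i => a (2 * i))
    (htop.comp (tendsto_atTop_atTop.2 fun b => ⟨max b 0, fun i hi => by omega⟩))
    (hbot.comp (tendsto_atBot_atBot.2 fun b => ⟨min b 0, fun i hi => by omega⟩))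
  have key := le_sq_mul_of_antitone_comp_of_le_mul (fun i j hij => hmono.monotone (by omega))
    hcover hW₀ (one_le_exp (by positivity : 0 ≤ (M + 2 * α) * L)) hanti hloc ht
  have hsum : ∀ v : Fin n → ℝ, ∑ i, v i ^ 2 = v ⬝ᵥ v := fun v => by simp [dotProduct, sq]
  simp only [hsum]
  exact sqrt_le_mul_exp_mul_sqrt (exp_pos _).le key

/-- alternating good/bad intervals for a linear time-varying system.
On the "good" intervals `[a_{2i}, a_{2i+1}]` (length ≥ k) the symmetric part of `J`
is `≤ -2c Iₙ`, on the "bad" intervals `[a_{2i+1}, a_{2i+2}]` (length ≤ L) it is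
`≤ M Iₙ`; if `c k > M L + α (k + L)` then every solution of `δ̇x = J(t) δx` decays
as `|δx(t)| ≤ K e^{-λ(t - t0)} |δx(t0)|` with `K, λ > 0` independent of the solution. -/
theorem stmt_16 (n : ℕ) (J : ℝ → Matrix (Fin n) (Fin n) ℝ) (hJ : Continuous J)
    (M L c k α : ℝ) (hM : 0 < M) (hL : 0 < L) (hc : 0 < c) (hk : 0 < k) (hα : 0 < α)
    (a : ℤ → ℝ) (hmono : StrictMono a)
    (htop : Filter.Tendsto a Filter.atTop Filter.atTop)
    (hbot : Filter.Tendsto a Filter.atBot Filter.atBot)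
    (hgood_len : ∀ i : ℤ, k ≤ a (2 * i + 1) - a (2 * i))
    (hbad_len : ∀ i : ℤ, a (2 * i + 2) - a (2 * i + 1) ≤ L)
    (hgood : ∀ i : ℤ, ∀ t ∈ Set.Icc (a (2 * i)) (a (2 * i + 1)), ∀ v : Fin n → ℝ,
      v ⬝ᵥ (J t + (J t)ᵀ).mulVec v ≤ -2 * c * (v ⬝ᵥ v))
    (hbad : ∀ i : ℤ, ∀ t ∈ Set.Icc (a (2 * i + 1)) (a (2 * i + 2)), ∀ v : Fin n → ℝ,
      v ⬝ᵥ (J t + (J t)ᵀ).mulVec v ≤ M * (v ⬝ᵥ v))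
    (hrate : M * L + α * (k + L) < c * k) :
    ∃ K lam : ℝ, 0 < K ∧ 0 < lam ∧
      ∀ δ : ℝ → Fin n → ℝ, (∀ t, HasDerivAt δ ((J t).mulVec (δ t)) t) →
        ∀ t0 t : ℝ, t0 ≤ t →
          Real.sqrt (∑ i, (δ t i) ^ 2) ≤
            K * Real.exp (-lam * (t - t0)) * Real.sqrt (∑ i, (δ t0 i) ^ 2) :=
  stmt_16_general n J M L c k α hM hL hk hα a hmono htop hbot hgood_len hbad_len hgood hbad hrate
end
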